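/- arXiv:2107.00574 — 2 statements merged into one kernel-verified Lean document; each statement's English description precedes it below -/
import Mathlib

section
/- Let n be a positive integer, let X be a real symmetric n×n positive semidefinite matrix with all diagonal entries equal to 1, and let λ ∈ [0,1]. Then the matrix λ·f(X) + (1−λ)·I belongs to the trigonometric approximation TA, i.e., there exists a real symmetric n×n positive semidefinite matrix Y with all diagonal entries equal to 1 such that λ·f(X) + (1−λ)·I = f(Y). In other words, TA is star-like with center the identity matrix I. -/
/-!
The off-diagonal entries of `Y` are forced to be `sin (lam * arcsin (X i j))`, so `Y` is the
entrywise `sin (lam * arcsin ·)` of `X` plus `(1 - sin (lam * π / 2)) • 1`. On `[-1, 1]`,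
`sin (lam * arcsin x) = ∑ a_k x^(2k+1)` with `a₀ = lam` and
`a_{k+1} = a_k ((2k+1)² - lam²) / ((2k+2)(2k+3)) ≥ 0`, a recursion read off from the ODE
`(1 - x²) F'' = x F' - lam² F`. By the Schur product theorem every Hadamard power of `X` is
positive semidefinite, hence so is the series, and adding a nonnegative multiple of the identity
keeps `Y` positive semidefinite.
-/

open Real Matrix Set Filter Topology

namespace SinMulArcsin

noncomputable def coeff (lam : ℝ) : ℕ → ℝ
  | 0 => lam
  | k + 1 => coeff lam k * ((2 * k + 1) ^ 2 - lam ^ 2) / ((2 * k + 2) * (2 * k + 3))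

/-- The `j`-th derivative of `coeff lam k * x ^ (2k+1)`; for `j > 2k+1` the truncated exponent is
harmless because the `descFactorial` vanishes. -/
noncomputable def term (lam : ℝ) (j k : ℕ) (x : ℝ) : ℝ :=
  (2 * k + 1).descFactorial j * coeff lam k * x ^ (2 * k + 1 - j)

noncomputable def derivSeries (lam : ℝ) (j : ℕ) (x : ℝ) : ℝ :=
  ∑' k, term lam j k x

variable {lam : ℝ}

theorem coeff_mem_Icc (hlam : lam ∈ Icc 0 1) : ∀ k, coeff lam k ∈ Icc 0 1
  | 0 => hlam
  | k + 1 => by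
    obtain ⟨h0, h1⟩ := coeff_mem_Icc hlam k
    have hk : (0 : ℝ) ≤ k := k.cast_nonneg
    have hden : (0 : ℝ) < (2 * k + 2) * (2 * k + 3) := by positivity
    have hnum : 0 ≤ (2 * (k : ℝ) + 1) ^ 2 - lam ^ 2 := by nlinarith [hlam.1, hlam.2]
    have hq : 0 ≤ ((2 * (k : ℝ) + 1) ^ 2 - lam ^ 2) / ((2 * k + 2) * (2 * k + 3)) :=
      div_nonneg hnum hden.le
    rw [coeff, mul_div_assoc]
    exact ⟨mul_nonneg h0 hq, mul_le_one₀ h1 hq ((div_le_one hden).2 (by nlinarith))⟩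

theorem term_zero (k : ℕ) (x : ℝ) : term lam 0 k x = coeff lam k * x ^ (2 * k + 1) := by
  simp [term]

theorem hasDerivAt_term (j k : ℕ) (x : ℝ) :
    HasDerivAt (term lam j k) (term lam (j + 1) k x) x := by
  refine ((hasDerivAt_pow (2 * k + 1 - j) x).const_mul
    ((2 * k + 1).descFactorial j * coeff lam k : ℝ)).congr_deriv ?_
  rw [term, Nat.descFactorial_succ, Nat.sub_sub]
  push_cast
  ring

theorem abs_term_le (hlam : lam ∈ Icc 0 1) {j : ℕ} (hj : j ≤ 2) (k : ℕ) {r y : ℝ}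
    (hr : r ≤ 1) (hy : |y| ≤ r) : |term lam j k y| ≤ (2 * k + 1) ^ 2 * r ^ k := by
  obtain ⟨h0, h1⟩ := coeff_mem_Icc hlam k
  have hr0 : 0 ≤ r := (abs_nonneg y).trans hy
  have hd : ((2 * k + 1).descFactorial j : ℝ) ≤ (2 * k + 1) ^ 2 :=
    calc ((2 * k + 1).descFactorial j : ℝ) ≤ (2 * k + 1) ^ j := by
          exact_mod_cast Nat.descFactorial_le_pow (2 * k + 1) j
      _ ≤ (2 * k + 1) ^ 2 := pow_le_pow_right₀ (by linarith [k.cast_nonneg (α := ℝ)]) hj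
  have hp : |y| ^ (2 * k + 1 - j) ≤ r ^ k :=
    (pow_le_pow_left₀ (abs_nonneg y) hy _).trans (pow_le_pow_of_le_one hr0 hr (by omega))
  rw [term, abs_mul, abs_mul, abs_pow, Nat.abs_cast, abs_of_nonneg h0]
  calc _ ≤ (2 * k + 1) ^ 2 * 1 * r ^ k := by gcongr
    _ = _ := by ring

theorem summable_sq_mul_geometric {r : ℝ} (hr0 : 0 ≤ r) (hr1 : r < 1) :
    Summable fun k : ℕ => (2 * k + 1 : ℝ) ^ 2 * r ^ k := by
  have hr : ‖r‖ < 1 := by rwa [Real.norm_of_nonneg hr0]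
  have := ((summable_pow_mul_geometric_of_norm_lt_one 2 hr).mul_left 4).add
    (((summable_pow_mul_geometric_of_norm_lt_one 1 hr).mul_left 4).add
      (summable_geometric_of_lt_one hr0 hr1))
  exact this.congr fun k => by ring

theorem summable_term (hlam : lam ∈ Icc 0 1) {j : ℕ} (hj : j ≤ 2) {x : ℝ} (hx : |x| < 1) :
    Summable fun k => term lam j k x :=
  (summable_sq_mul_geometric (abs_nonneg x) hx).of_norm_bounded fun k =>
    abs_term_le hlam hj k hx.le le_rfl

theorem hasDerivAt_derivSeries (hlam : lam ∈ Icc 0 1) {j : ℕ} (hj : j ≤ 1) {x : ℝ}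
    (hx : |x| < 1) : HasDerivAt (derivSeries lam j) (derivSeries lam (j + 1) x) x := by
  obtain ⟨r, hxr, hr1⟩ := exists_between hx
  have hx' : x ∈ Ioo (-r) r := abs_lt.1 hxr
  exact hasDerivAt_tsum_of_isPreconnected
    (summable_sq_mul_geometric ((abs_nonneg x).trans hxr.le) hr1) isOpen_Ioo isPreconnected_Ioo
    (fun k y _ => hasDerivAt_term j k y)
    (fun k y hy => abs_term_le hlam (by omega) k hr1.le (abs_lt.2 hy).le)
    hx' (summable_term hlam (by omega) hx) hx'

theorem term_two (k : ℕ) (x : ℝ) :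
    term lam 2 k x = (2 * k + 1) * (2 * k) * coeff lam k * x ^ (2 * k - 1) := by
  rw [term, Nat.descFactorial_succ, Nat.descFactorial_one, Nat.add_sub_cancel,
    show 2 * k + 1 - 2 = 2 * k - 1 by omega]
  push_cast
  ring

theorem term_two_succ (k : ℕ) (x : ℝ) : term lam 2 (k + 1) x =
    x ^ 2 * term lam 2 k x + x * term lam 1 k x - lam ^ 2 * term lam 0 k x := by
  have h2 : x ^ 2 * term lam 2 k x = (2 * k + 1) * (2 * k) * coeff lam k * x ^ (2 * k + 1) := by
    rcases k with _ | k
    · simp [term_two]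
    · rw [term_two, show 2 * (k + 1) - 1 = 2 * k + 1 by omega]
      ring
  have h1 : x * term lam 1 k x = (2 * k + 1) * coeff lam k * x ^ (2 * k + 1) := by
    simp [term]
    ring
  rw [h2, h1, term_zero, term_two, show 2 * (k + 1) - 1 = 2 * k + 1 by omega, coeff]
  field_simp
  push_cast
  ring

theorem derivSeries_ode (hlam : lam ∈ Icc 0 1) {x : ℝ} (hx : |x| < 1) :
    (1 - x ^ 2) * derivSeries lam 2 x =
      x * derivSeries lam 1 x - lam ^ 2 * derivSeries lam 0 x := by
  have s0 := summable_term hlam (by norm_num : 0 ≤ 2) hx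
  have s1 := summable_term hlam (by norm_num : 1 ≤ 2) hx
  have s2 := summable_term hlam le_rfl hx
  have hshift : derivSeries lam 2 x = ∑' k, term lam 2 (k + 1) x := by
    rw [derivSeries, s2.tsum_eq_zero_add]
    simp [term]
  have hrec : derivSeries lam 2 x = x ^ 2 * derivSeries lam 2 x +
      (x * derivSeries lam 1 x - lam ^ 2 * derivSeries lam 0 x) := by
    conv_lhs => rw [hshift]
    simp only [term_two_succ, add_sub_assoc]
    rw [(s2.mul_left _).tsum_add ((s1.mul_left x).sub (s0.mul_left _)),
      (s1.mul_left x).tsum_sub (s0.mul_left _), tsum_mul_left, tsum_mul_left, tsum_mul_left]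
    rfl
  linear_combination hrec

theorem derivSeries_zero_zero : derivSeries lam 0 0 = 0 := by
  simp [derivSeries, term]

theorem derivSeries_one_zero : derivSeries lam 1 0 = lam := by
  rw [derivSeries, tsum_eq_single 0 fun k hk => by simp [term, hk]]
  simp [term, coeff]

theorem abs_sin_lt_one {θ : ℝ} (hθ : θ ∈ Ioo (-(π / 2)) (π / 2)) : |sin θ| < 1 := by
  have hcos := cos_pos_of_mem_Ioo hθ
  rw [← sq_lt_one_iff_abs_lt_one]
  nlinarith [sin_sq_add_cos_sq θ]

/-- By the ODE above, `φ θ = derivSeries lam 0 (sin θ)` solves `φ'' = -lam² φ` on `(-π/2, π/2)`,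
as does `sin (lam θ)`, with the same initial data; the energy `h'² + lam² h²` of the difference
`h` is constant and vanishes at `0`. -/
theorem derivSeries_zero_sin (hlam : lam ∈ Icc 0 1) {θ : ℝ}
    (hθ : θ ∈ Ioo (-(π / 2)) (π / 2)) : derivSeries lam 0 (sin θ) = sin (lam * θ) := by
  set T := Ioo (-(π / 2)) (π / 2)
  have h0T : (0 : ℝ) ∈ T := ⟨by linarith [pi_pos], by linarith [pi_pos]⟩
  have hconst : ∀ f : ℝ → ℝ, (∀ t ∈ T, HasDerivAt f 0 t) → ∀ t ∈ T, f t = f 0 :=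
    fun f hf t ht => isOpen_Ioo.is_const_of_deriv_eq_zero isPreconnected_Ioo
      (fun s hs => (hf s hs).differentiableAt.differentiableWithinAt) (fun s hs => (hf s hs).deriv)
      ht h0T
  set h : ℝ → ℝ := fun t => derivSeries lam 0 (sin t) - sin (lam * t)
  set h' : ℝ → ℝ := fun t => derivSeries lam 1 (sin t) * cos t - lam * cos (lam * t)
  have hlin : ∀ t, HasDerivAt (fun u => lam * u) lam t := fun t => by
    simpa using (hasDerivAt_id t).const_mul lam
  have dh : ∀ t ∈ T, HasDerivAt h (h' t) t := fun t ht => by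
    have := ((hasDerivAt_derivSeries hlam zero_le_one (abs_sin_lt_one ht)).comp t
      (hasDerivAt_sin t)).sub ((hasDerivAt_sin (lam * t)).comp t (hlin t))
    exact this.congr_deriv (by simp only [h']; ring)
  have dh' : ∀ t ∈ T, HasDerivAt h' (-lam ^ 2 * h t) t := fun t ht => by
    have := (((hasDerivAt_derivSeries hlam le_rfl (abs_sin_lt_one ht)).comp t
      (hasDerivAt_sin t)).mul (hasDerivAt_cos t)).sub
      (((hasDerivAt_cos (lam * t)).comp t (hlin t)).const_mul lam)
    refine this.congr_deriv ?_
    simp only [h, Function.comp_apply, Nat.reduceAdd]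
    linear_combination derivSeries_ode hlam (abs_sin_lt_one ht) +
      derivSeries lam 2 (sin t) * sin_sq_add_cos_sq t
  have hh0 : h 0 = 0 := by simp [h, derivSeries_zero_zero]
  have hE : ∀ t ∈ T, h' t ^ 2 + lam ^ 2 * h t ^ 2 = 0 := fun t ht => by
    have := hconst (fun t => h' t ^ 2 + lam ^ 2 * h t ^ 2) (fun s hs =>
      (((dh' s hs).pow 2).add (((dh s hs).pow 2).const_mul (lam ^ 2))).congr_deriv (by ring)) t ht
    simpa [h', hh0, derivSeries_one_zero] using this
  have hh'_eq : ∀ t ∈ T, h' t = 0 := fun t ht => by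
    nlinarith [hE t ht, sq_nonneg (h' t), sq_nonneg (lam * h t)]
  have := hconst h (fun t ht => hh'_eq t ht ▸ dh t ht) θ hθ
  rw [hh0] at this
  linarith

theorem derivSeries_zero_eq (hlam : lam ∈ Icc 0 1) {x : ℝ} (hx : |x| < 1) :
    derivSeries lam 0 x = sin (lam * arcsin x) := by
  obtain ⟨hx₁, hx₂⟩ := abs_lt.1 hx
  have := derivSeries_zero_sin hlam
    ⟨neg_pi_div_two_lt_arcsin.2 hx₁, arcsin_lt_pi_div_two.2 hx₂⟩
  rwa [sin_arcsin hx₁.le hx₂.le] at this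

/-- Partial sums are bounded by `1`: let `x → 1⁻` in
`∑_{k<K} coeff lam k x^(2k+1) ≤ sin (lam arcsin x) ≤ 1`. -/
theorem summable_coeff (hlam : lam ∈ Icc 0 1) : Summable (coeff lam) := by
  refine summable_of_sum_range_le (c := 1) (fun k => (coeff_mem_Icc hlam k).1) fun K => ?_
  have hlim : Tendsto (fun x => ∑ k ∈ Finset.range K, term lam 0 k x) (𝓝[<] 1)
      (𝓝 (∑ k ∈ Finset.range K, coeff lam k)) := by
    have hcont : Continuous fun x => ∑ k ∈ Finset.range K, term lam 0 k x := by
      simp only [term_zero]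
      fun_prop
    simpa [term_zero] using (hcont.tendsto 1).mono_left nhdsWithin_le_nhds
  refine le_of_tendsto hlim ?_
  filter_upwards [Ioo_mem_nhdsLT zero_lt_one] with x hx
  have hx' : |x| < 1 := by rw [abs_of_pos hx.1]; exact hx.2
  calc ∑ k ∈ Finset.range K, term lam 0 k x ≤ derivSeries lam 0 x :=
        (summable_term hlam (by norm_num) hx').sum_le_tsum _ fun k _ => by
          rw [term_zero]
          exact mul_nonneg (coeff_mem_Icc hlam k).1 (pow_nonneg hx.1.le _)
    _ = sin (lam * arcsin x) := derivSeries_zero_eq hlam hx'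
    _ ≤ 1 := sin_le_one _

/-- By Weierstrass' M-test with the summable bound `coeff lam`, both sides are continuous on
`[-1, 1]`, and they agree on `(-1, 1)`. -/
theorem hasSum_sin_mul_arcsin (hlam : lam ∈ Icc 0 1) {x : ℝ} (hx : x ∈ Icc (-1) 1) :
    HasSum (fun k => coeff lam k * x ^ (2 * k + 1)) (sin (lam * arcsin x)) := by
  have hbound : ∀ k, ∀ y ∈ Icc (-1 : ℝ) 1, ‖term lam 0 k y‖ ≤ coeff lam k := by
    intro k y hy
    rw [term_zero, norm_mul, norm_pow, Real.norm_of_nonneg (coeff_mem_Icc hlam k).1]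
    exact mul_le_of_le_one_right (coeff_mem_Icc hlam k).1
      (pow_le_one₀ (norm_nonneg y) (abs_le.2 hy))
  have heq : EqOn (derivSeries lam 0) (fun y => sin (lam * arcsin y)) (Icc (-1) 1) :=
    EqOn.of_subset_closure (s := Ioo (-1) 1) (fun y hy => derivSeries_zero_eq hlam (abs_lt.2 hy))
      (continuousOn_tsum (fun k => (continuous_const.mul (continuous_pow _)).continuousOn)
        (summable_coeff hlam) hbound)
      (by fun_prop) Ioo_subset_Icc_self (by rw [closure_Ioo (by norm_num)])
  have hs : HasSum (fun k => term lam 0 k x) (derivSeries lam 0 x) :=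
    ((summable_coeff hlam).of_norm_bounded fun k => hbound k x hx).hasSum
  simpa only [term_zero, heq hx] using hs

theorem arcsin_sin_mul_arcsin (hlam : lam ∈ Icc 0 1) (x : ℝ) :
    arcsin (sin (lam * arcsin x)) = lam * arcsin x := by
  have h₁ := neg_pi_div_two_le_arcsin x
  have h₂ := arcsin_le_pi_div_two x
  apply arcsin_sin
  · nlinarith [mul_nonneg hlam.1 (by linarith : 0 ≤ arcsin x + π / 2),
      mul_nonneg (sub_nonneg.2 hlam.2) pi_pos.le]
  · nlinarith [mul_nonneg hlam.1 (by linarith : 0 ≤ π / 2 - arcsin x),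
      mul_nonneg (sub_nonneg.2 hlam.2) pi_pos.le]

end SinMulArcsin

namespace Matrix.PosSemidef

variable {ι : Type*}

theorem abs_apply_le_one {X : Matrix ι ι ℝ} (hX : X.PosSemidef) (hd : ∀ i, X i i = 1)
    (i j : ι) : |X i j| ≤ 1 := by
  classical
  have hsym : X j i = X i j := by simpa using hX.isHermitian.apply i j
  have hdet := (hX.submatrix ![i, j]).det_nonneg
  rw [det_fin_two] at hdet
  simp only [submatrix_apply, cons_val_zero, cons_val_one, hd, hsym] at hdet
  rw [abs_le_one_iff_mul_self_le_one]
  linarith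

open scoped ComplexOrder in
theorem map_pow {𝕜 : Type*} [RCLike 𝕜] [Finite ι] {X : Matrix ι ι 𝕜} (hX : X.PosSemidef) :
    ∀ m : ℕ, (X.map (· ^ m)).PosSemidef
  | 0 => by
    simpa [vecMulVec, Matrix.map] using posSemidef_vecMulVec_self_star fun _ : ι => (1 : 𝕜)
  | m + 1 => by
    convert (map_pow hX m).hadamard hX using 1
    ext i j
    simp [pow_succ]

theorem map_of_hasSum [Fintype ι] {X : Matrix ι ι ℝ} (hX : X.PosSemidef) {f : ℝ → ℝ}
    {a : ℕ → ℝ} {e : ℕ → ℕ} (ha : ∀ k, 0 ≤ a k)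
    (hf : ∀ i j, HasSum (fun k => a k * X i j ^ e k) (f (X i j))) : (X.map f).PosSemidef := by
  refine .of_dotProduct_mulVec_nonneg (hX.isHermitian.map f fun _ => rfl) fun v => ?_
  have hsum : HasSum (fun k => a k • X.map (· ^ e k)) (X.map f) :=
    Pi.hasSum.2 fun i => Pi.hasSum.2 fun j => by simpa using hf i j
  let q : Matrix ι ι ℝ →+ ℝ :=
    { toFun := fun M => star v ⬝ᵥ (M *ᵥ v)
      map_zero' := by simp
      map_add' := fun M N => by simp [add_mulVec, dotProduct_add] }
  have hq : Continuous q :=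
    continuous_const.dotProduct (continuous_id.matrix_mulVec continuous_const)
  refine (hsum.map q hq).nonneg fun k => ?_
  simpa [q, smul_mulVec, dotProduct_smul] using
    mul_nonneg (ha k) ((map_pow hX (e k)).dotProduct_mulVec_nonneg v)

end Matrix.PosSemidef

open SinMulArcsin

theorem ta_star_like_general (n : ℕ)
    (X : Matrix (Fin n) (Fin n) ℝ) (hX : X.PosSemidef) (hXd : ∀ i, X i i = 1)
    (lam : ℝ) (hlam : lam ∈ Set.Icc (0 : ℝ) 1) :
    ∃ Y : Matrix (Fin n) (Fin n) ℝ, Y.PosSemidef ∧ (∀ i, Y i i = 1) ∧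
      lam • X.map (fun x => 2 / Real.pi * Real.arcsin x) + (1 - lam) • (1 : Matrix (Fin n) (Fin n) ℝ)
        = Y.map (fun x => 2 / Real.pi * Real.arcsin x) := by
  set Y := X.map (fun x => sin (lam * arcsin x)) + (1 - sin (lam * (π / 2))) • 1
  have hYpsd : Y.PosSemidef :=
    (hX.map_of_hasSum (fun k => (coeff_mem_Icc hlam k).1) fun i j =>
      hasSum_sin_mul_arcsin hlam (abs_le.1 (hX.abs_apply_le_one hXd i j))).add
      (PosSemidef.one.smul (sub_nonneg.2 (sin_le_one _)))
  have hYd : ∀ i, Y i i = 1 := fun i => by simp [Y, hXd, arcsin_one]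
  refine ⟨Y, hYpsd, hYd, ?_⟩
  ext i j
  rcases eq_or_ne i j with rfl | hij
  · simp only [Matrix.add_apply, Matrix.smul_apply, map_apply, hXd, hYd, one_apply_eq,
      arcsin_one, smul_eq_mul]
    field_simp
    ring
  · simp [Y, hij, arcsin_sin_mul_arcsin hlam]
    ring

/-- The trigonometric approximation TA is star-like with center the
identity matrix: for any `X ∈ SR` and `λ ∈ [0,1]`, the matrix
`λ • f(X) + (1 - λ) • I` lies in `TA`, i.e. equals `f(Y)` for some `Y ∈ SR`,
where `f` is the entrywise map `x ↦ (2/π) * arcsin x`. -/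
theorem ta_star_like (n : ℕ) (hn : 0 < n)
    (X : Matrix (Fin n) (Fin n) ℝ) (hX : X.PosSemidef) (hXd : ∀ i, X i i = 1)
    (lam : ℝ) (hlam : lam ∈ Set.Icc (0 : ℝ) 1) :
    ∃ Y : Matrix (Fin n) (Fin n) ℝ, Y.PosSemidef ∧ (∀ i, Y i i = 1) ∧
      lam • X.map (fun x => 2 / Real.pi * Real.arcsin x) + (1 - lam) • (1 : Matrix (Fin n) (Fin n) ℝ)
        = Y.map (fun x => 2 / Real.pi * Real.arcsin x) :=
  ta_star_like_general n X hX hXd lam hlam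
end

section
/- Let n be a positive integer, let λ ∈ [0,1], and let X be a real symmetric n×n positive semidefinite matrix with all diagonal entries equal to 1. Then the matrix f_λ(X), whose (i,j) entry is sin(λ·arcsin(X_{ij})), is positive semidefinite. That is, the entrywise map f_λ(x) = sin(λ·arcsin(x)) preserves positive semidefiniteness on SR. -/
/-!
For `|x| < 1`, `sin (λ arcsin x) = ∑ cₙ xⁿ`, where the coefficients obey
`(n + 1) (n + 2) cₙ₊₂ = (n² - λ²) cₙ`, `c₀ = 0`, `c₁ = λ`; for `0 ≤ λ ≤ 1` they are all
nonnegative. The identity holds because `θ ↦ ∑ cₙ sinⁿ θ` and `θ ↦ sin (λ θ)` solve the same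
initial value problem `y'' = -λ² y`, `y 0 = 0`, `y' 0 = λ`. By the Schur product theorem every
entrywise power of a positive semidefinite matrix is positive semidefinite, hence so is every
entrywise series with nonnegative coefficients. A matrix in `SR` has entries in `[-1, 1]`, and the
boundary case `|Xᵢⱼ| = 1` follows by scaling `X` by `t < 1` and letting `t → 1`.
-/

open Real Matrix Filter Topology Set
open scoped ComplexOrder

def derivCoeff (c : ℕ → ℝ) (n : ℕ) : ℝ := (n + 1) * c (n + 1)

theorem tsum_mul_zero_pow (c : ℕ → ℝ) : ∑' n, c n * 0 ^ n = c 0 := by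
  rw [tsum_eq_single 0 fun n hn => by simp [hn]]
  simp

section PowerSeries

/- The growth bound `(n + k).descFactorial k = (n + 1) ⋯ (n + k)` is reproduced exactly by
termwise differentiation, with `k` raised by one. -/
variable {c : ℕ → ℝ} {k : ℕ}

theorem abs_derivCoeff_le (hc : ∀ n, |c n| ≤ (n + k).descFactorial k) (n : ℕ) :
    |derivCoeff c n| ≤ (n + (k + 1)).descFactorial (k + 1) := by
  have h := Nat.descFactorial_succ (n + 1 + k) k
  rw [show n + 1 + k - k = n + 1 by omega] at h
  rw [derivCoeff, show n + (k + 1) = n + 1 + k by omega, h, abs_mul, Nat.cast_mul]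
  push_cast
  rw [abs_of_nonneg (by positivity)]
  exact mul_le_mul_of_nonneg_left (hc (n + 1)) (by positivity)

theorem summable_mul_pow_of_abs_le_descFactorial (hc : ∀ n, |c n| ≤ (n + k).descFactorial k)
    {x : ℝ} (hx : |x| < 1) : Summable fun n => c n * x ^ n := by
  refine .of_norm_bounded
    (summable_descFactorial_mul_geometric_of_norm_lt_one k (r := |x|) (by simpa using hx))
    fun n => ?_
  rw [norm_mul, norm_pow, Real.norm_eq_abs]
  exact mul_le_mul_of_nonneg_right (hc n) (by positivity)

theorem hasDerivAt_tsum_mul_pow (hc : ∀ n, |c n| ≤ (n + k).descFactorial k) {x : ℝ}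
    (hx : |x| < 1) :
    HasDerivAt (fun y => ∑' n, c n * y ^ n) (∑' n, derivCoeff c n * x ^ n) x := by
  obtain ⟨r, hxr, hr₁⟩ := exists_between hx
  have hr : 0 ≤ r := (abs_nonneg x).trans hxr.le
  have hmaj : Summable fun n => |derivCoeff c n| * r ^ n :=
    summable_mul_pow_of_abs_le_descFactorial (c := fun n => |derivCoeff c n|)
      (fun n => (abs_abs _).trans_le (abs_derivCoeff_le hc n)) (by rwa [abs_of_nonneg hr])
  have hu : Summable fun n : ℕ => |n * c n| * r ^ (n - 1) :=
    (summable_nat_add_iff 1).1 (by simpa [derivCoeff] using hmaj)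
  have hball : ∀ y ∈ Metric.ball (0 : ℝ) r, |y| ≤ r := fun y hy => by
    simpa using (Metric.mem_ball.1 hy).le
  have h := hasDerivAt_tsum_of_isPreconnected hu Metric.isOpen_ball
    (convex_ball (0 : ℝ) r).isPreconnected
    (g := fun n y => c n * y ^ n) (g' := fun n y => n * c n * y ^ (n - 1))
    (fun n y _ => ((hasDerivAt_pow n y).const_mul (c n)).congr_deriv (by ring))
    (fun n y hy => by
      rw [norm_mul, norm_pow, Real.norm_eq_abs, Real.norm_eq_abs]
      exact mul_le_mul_of_nonneg_left (pow_le_pow_left₀ (abs_nonneg y) (hball y hy) _)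
        (abs_nonneg _))
    (Metric.mem_ball_self ((abs_nonneg x).trans_lt hxr))
    (summable_mul_pow_of_abs_le_descFactorial hc (by simp)) (by simpa using hxr)
  have hshift := summable_mul_pow_of_abs_le_descFactorial (abs_derivCoeff_le hc) hx
  rw [tsum_eq_zero_add' (by simpa [derivCoeff] using hshift)] at h
  simpa [derivCoeff] using h

end PowerSeries

theorem IsOpen.eqOn_zero_of_hasDerivAt_neg_mul {s : Set ℝ} (hs : IsOpen s)
    (hs' : IsPreconnected s) {g g' : ℝ → ℝ} {ω t₀ : ℝ} (hω : 0 ≤ ω)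
    (hg : ∀ t ∈ s, HasDerivAt g (g' t) t)
    (hg' : ∀ t ∈ s, HasDerivAt g' (-ω * g t) t) (ht₀ : t₀ ∈ s) (h₀ : g t₀ = 0) (h₀' : g' t₀ = 0) :
    s.EqOn g 0 := by
  have isConst {f f' : ℝ → ℝ} (hf : ∀ t ∈ s, HasDerivAt f (f' t) t) (hf' : ∀ t ∈ s, f' t = 0)
      {t} (ht : t ∈ s) : f t = f t₀ :=
    hs.is_const_of_deriv_eq_zero hs'
      (fun t ht => (hf t ht).differentiableAt.differentiableWithinAt)
      (fun t ht => (hf t ht).deriv.trans (hf' t ht)) ht ht₀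
  have henergy : ∀ t ∈ s, g' t ^ 2 + ω * g t ^ 2 = 0 := fun t ht => by
    have := isConst (f := fun t => g' t ^ 2 + ω * g t ^ 2)
      (fun t ht => ((hg' t ht).pow 2).add (((hg t ht).pow 2).const_mul ω))
      (fun t _ => by ring) ht
    simpa [h₀, h₀'] using this
  have hg'0 : ∀ t ∈ s, g' t = 0 := fun t ht => by
    nlinarith [henergy t ht, sq_nonneg (g' t), mul_nonneg hω (sq_nonneg (g t))]
  intro t ht
  simpa [h₀] using isConst hg hg'0 ht

noncomputable def sinArcsinCoeff (lam : ℝ) : ℕ → ℝ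
  | 0 => 0
  | 1 => lam
  | n + 2 => (n ^ 2 - lam ^ 2) / ((n + 1) * (n + 2)) * sinArcsinCoeff lam n

theorem sinArcsinCoeff_recurrence (lam : ℝ) (n : ℕ) :
    (n + 1) * (n + 2) * sinArcsinCoeff lam (n + 2) = (n ^ 2 - lam ^ 2) * sinArcsinCoeff lam n := by
  rw [sinArcsinCoeff]
  field_simp

section sinArcsinCoeff

variable {lam : ℝ}

theorem sinArcsinCoeff_nonneg (h₀ : 0 ≤ lam) (h₁ : lam ≤ 1) : ∀ n, 0 ≤ sinArcsinCoeff lam n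
  | 0 => le_rfl
  | 1 => h₀
  | 2 => by simp [sinArcsinCoeff]
  | n + 3 => by
    rw [sinArcsinCoeff]
    refine mul_nonneg (div_nonneg ?_ (by positivity)) (sinArcsinCoeff_nonneg h₀ h₁ (n + 1))
    push_cast
    nlinarith [sq_nonneg (n : ℝ), (n.cast_nonneg : (0 : ℝ) ≤ n)]

theorem abs_sinArcsinCoeff_le_one (h : |lam| ≤ 1) : ∀ n, |sinArcsinCoeff lam n| ≤ 1
  | 0 => by simp [sinArcsinCoeff]
  | 1 => h
  | n + 2 => by
    have hlam : lam ^ 2 ≤ 1 := (sq_le_one_iff_abs_le_one lam).2 h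
    have hratio : |(n ^ 2 - lam ^ 2) / ((n + 1) * (n + 2) : ℝ)| ≤ 1 := by
      rw [abs_div, abs_of_pos (by positivity : (0 : ℝ) < (n + 1) * (n + 2)),
        div_le_one (by positivity), abs_le]
      constructor <;> nlinarith [sq_nonneg (n : ℝ)]
    rw [sinArcsinCoeff, abs_mul]
    exact mul_le_one₀ hratio (abs_nonneg _) (abs_sinArcsinCoeff_le_one h n)

variable {x : ℝ}

theorem sinArcsinCoeff_ode (h : |lam| ≤ 1) (hx : |x| < 1) :
    (1 - x ^ 2) * ∑' n, derivCoeff (derivCoeff (sinArcsinCoeff lam)) n * x ^ n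
      - x * ∑' n, derivCoeff (sinArcsinCoeff lam) n * x ^ n
      + lam ^ 2 * ∑' n, sinArcsinCoeff lam n * x ^ n = 0 := by
  have hrec := sinArcsinCoeff_recurrence lam
  set c := sinArcsinCoeff lam
  have hc : ∀ n, |c n| ≤ (n + 0).descFactorial 0 := by simpa using abs_sinArcsinCoeff_le_one h
  have H₀ := (summable_mul_pow_of_abs_le_descFactorial hc hx).hasSum
  have H₁ := (summable_mul_pow_of_abs_le_descFactorial (abs_derivCoeff_le hc) hx).hasSum
  have H₂ := (summable_mul_pow_of_abs_le_descFactorial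
    (abs_derivCoeff_le (abs_derivCoeff_le hc)) hx).hasSum
  set G₀ := ∑' n, c n * x ^ n
  set G₁ := ∑' n, derivCoeff c n * x ^ n
  set G₂ := ∑' n, derivCoeff (derivCoeff c) n * x ^ n
  have hA : HasSum (fun n : ℕ => n ^ 2 * c n * x ^ n) (G₂ + lam ^ 2 * G₀) :=
    (H₂.add (H₀.mul_left (lam ^ 2))).congr_fun fun n => by
      simp only [derivCoeff, Nat.cast_add, Nat.cast_one, Nat.add_assoc, Nat.reduceAdd]
      linear_combination (-x ^ n) * hrec n
  have hB : HasSum (fun n : ℕ => n * c n * x ^ n) (x * G₁) :=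
    (hasSum_nat_add_iff' 1).1 <| by
      simpa using (H₁.mul_left x).congr_fun fun n => by simp only [derivCoeff]; ring
  have hC : HasSum (fun n : ℕ => n * (n - 1) * c n * x ^ n) (x ^ 2 * G₂) :=
    (hasSum_nat_add_iff' 2).1 <| by
      simpa [Finset.sum_range_succ] using
        (H₂.mul_left (x ^ 2)).congr_fun fun n => by simp only [derivCoeff]; push_cast; ring
  have h₀ : HasSum (fun n : ℕ => n ^ 2 * c n * x ^ n - n * c n * x ^ n
      - n * (n - 1) * c n * x ^ n) 0 := hasSum_zero.congr_fun fun n => by ring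
  linear_combination ((hA.sub hB).sub hC).unique h₀

theorem hasSum_sinArcsinCoeff_mul_pow (h : |lam| ≤ 1) (hx : |x| < 1) :
    HasSum (fun n => sinArcsinCoeff lam n * x ^ n) (sin (lam * arcsin x)) := by
  have hc : ∀ n, |sinArcsinCoeff lam n| ≤ (n + 0).descFactorial 0 := by
    simpa using abs_sinArcsinCoeff_le_one h
  set G := fun y => ∑' n, sinArcsinCoeff lam n * y ^ n
  set G' := fun y => ∑' n, derivCoeff (sinArcsinCoeff lam) n * y ^ n
  set G'' := fun y => ∑' n, derivCoeff (derivCoeff (sinArcsinCoeff lam)) n * y ^ n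
  have hsin : ∀ θ ∈ Ioo (-(π / 2)) (π / 2), |sin θ| < 1 := fun θ hθ =>
    (sq_lt_one_iff_abs_lt_one _).1 (by nlinarith [sin_sq_add_cos_sq θ, cos_pos_of_mem_Ioo hθ])
  have hg : ∀ θ ∈ Ioo (-(π / 2)) (π / 2), HasDerivAt (fun θ => G (sin θ) - sin (lam * θ))
      (G' (sin θ) * cos θ - lam * cos (lam * θ)) θ := fun θ hθ => by
    refine (((hasDerivAt_tsum_mul_pow hc (hsin θ hθ)).comp θ (hasDerivAt_sin θ)).sub
      (((hasDerivAt_id θ).const_mul lam).sin)).congr_deriv ?_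
    simp only [id]
    ring
  have hg' : ∀ θ ∈ Ioo (-(π / 2)) (π / 2), HasDerivAt
      (fun θ => G' (sin θ) * cos θ - lam * cos (lam * θ))
      (-lam ^ 2 * (G (sin θ) - sin (lam * θ))) θ := fun θ hθ => by
    refine ((((hasDerivAt_tsum_mul_pow (abs_derivCoeff_le hc) (hsin θ hθ)).comp θ
      (hasDerivAt_sin θ)).mul (hasDerivAt_cos θ)).sub
      ((((hasDerivAt_id θ).const_mul lam).cos).const_mul lam)).congr_deriv ?_
    simp only [Function.comp_apply, id]
    linear_combination sinArcsinCoeff_ode h (hsin θ hθ) + G'' (sin θ) * sin_sq_add_cos_sq θ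
  have hzero : (0 : ℝ) ∈ Ioo (-(π / 2)) (π / 2) := ⟨by linarith [pi_pos], by linarith [pi_pos]⟩
  have hx' : arcsin x ∈ Ioo (-(π / 2)) (π / 2) :=
    ⟨neg_pi_div_two_lt_arcsin.2 (abs_lt.1 hx).1, arcsin_lt_pi_div_two.2 (abs_lt.1 hx).2⟩
  have := isOpen_Ioo.eqOn_zero_of_hasDerivAt_neg_mul isPreconnected_Ioo (sq_nonneg lam) hg hg' hzero
    (by simp [G, tsum_mul_zero_pow, sinArcsinCoeff])
    (by simp [G', tsum_mul_zero_pow, derivCoeff, sinArcsinCoeff]) hx'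
  simp only at this
  rw [Pi.zero_apply, sin_arcsin (abs_le.1 hx.le).1 (abs_le.1 hx.le).2, sub_eq_zero] at this
  exact this ▸ (summable_mul_pow_of_abs_le_descFactorial hc hx).hasSum

end sinArcsinCoeff

namespace Matrix

variable {n 𝕜 : Type*}

theorem PosSemidef.sq_apply_le {A : Matrix n n ℝ} (hA : A.PosSemidef) (i j : n) :
    A i j ^ 2 ≤ A i i * A j j := by
  have := (hA.submatrix ![i, j]).det_nonneg
  have hji : A j i = A i j := by simpa using hA.1.apply i j
  rw [det_fin_two] at this
  simpa [sq, hji] using this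

variable [Fintype n] [RCLike 𝕜]

theorem PosSemidef.map_pow_s1 {A : Matrix n n 𝕜} (hA : A.PosSemidef) (k : ℕ) :
    (A.map (· ^ k)).PosSemidef := by
  induction k with
  | zero =>
    have : A.map (· ^ 0) = vecMulVec (fun _ => 1) (star fun _ => 1) := by
      ext i j; simp [vecMulVec_apply]
    exact this ▸ posSemidef_vecMulVec_self_star _
  | succ k ih =>
    have : A.map (· ^ (k + 1)) = A.map (· ^ k) ⊙ A := by
      ext i j; simp [pow_succ]
    rw [this]; exact ih.hadamard hA

theorem isClosed_setOf_posSemidef : IsClosed {A : Matrix n n 𝕜 | A.PosSemidef} := by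
  simp only [posSemidef_iff_dotProduct_mulVec, Set.ofPred_and, Set.ofPred_forall]
  refine (isClosed_eq continuous_id.matrix_conjTranspose continuous_id).inter
    (isClosed_iInter fun x => isClosed_le continuous_const ?_)
  fun_prop

theorem PosSemidef.map_of_hasSum_s1 {A : Matrix n n 𝕜} (hA : A.PosSemidef) {f : 𝕜 → 𝕜}
    {c : ℕ → ℝ} (hc : ∀ k, 0 ≤ c k) (hf : ∀ i j, HasSum (fun k => c k • A i j ^ k) (f (A i j))) :
    (A.map f).PosSemidef := by
  have hsum : HasSum (fun k => c k • A.map (· ^ k)) (A.map f) :=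
    Pi.hasSum.2 fun i => Pi.hasSum.2 fun j => hf i j
  exact isClosed_setOf_posSemidef.mem_of_tendsto hsum.tendsto_sum_nat
    (Eventually.of_forall fun s => posSemidef_sum _ fun k _ => (hA.map_pow_s1 k).smul (hc k))

theorem PosSemidef.map_of_hasSum_of_norm_le_one {A : Matrix n n 𝕜} (hA : A.PosSemidef)
    (hA₁ : ∀ i j, ‖A i j‖ ≤ 1) {f : 𝕜 → 𝕜} (hf : Continuous f) {c : ℕ → ℝ} (hc : ∀ k, 0 ≤ c k)
    (hfc : ∀ x : 𝕜, ‖x‖ < 1 → HasSum (fun k => c k • x ^ k) (f x)) :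
    (A.map f).PosSemidef := by
  have hlim : Tendsto (fun t : ℝ => (t • A).map f) (𝓝[<] 1) (𝓝 (A.map f)) := by
    have : Continuous fun t : ℝ => (t • A).map f := by fun_prop
    simpa using this.continuousAt.continuousWithinAt.tendsto (x := 1)
  refine isClosed_setOf_posSemidef.mem_of_tendsto hlim ?_
  filter_upwards [Ioo_mem_nhdsLT zero_lt_one] with t ht
  refine (hA.smul ht.1.le).map_of_hasSum_s1 hc fun i j => hfc _ ?_
  calc ‖(t • A) i j‖ = t * ‖A i j‖ := by simp [norm_smul, abs_of_pos ht.1]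
    _ < 1 := (mul_le_of_le_one_right ht.1.le (hA₁ i j)).trans_lt ht.2

end Matrix

theorem entrywise_sin_lambda_arcsin_posSemidef_general (n : ℕ)
    (lam : ℝ) (hlam : lam ∈ Set.Icc (0 : ℝ) 1)
    (X : Matrix (Fin n) (Fin n) ℝ) (hX : X.PosSemidef) (hXd : ∀ i, X i i = 1) :
    (Matrix.of fun i j => Real.sin (lam * Real.arcsin (X i j))).PosSemidef := by
  obtain ⟨h₀, h₁⟩ := hlam
  have hX₁ : ∀ i j, ‖X i j‖ ≤ 1 := fun i j => by
    simpa [hXd, sq_le_one_iff_abs_le_one] using hX.sq_apply_le i j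
  exact hX.map_of_hasSum_of_norm_le_one (f := fun x => sin (lam * arcsin x)) hX₁ (by fun_prop)
    (sinArcsinCoeff_nonneg h₀ h₁) fun x hx => by
      simpa using hasSum_sinArcsinCoeff_mul_pow (abs_le.2 ⟨by linarith, h₁⟩) (by simpa using hx)

/-- For `λ ∈ [0,1]` and `X ∈ SR` (symmetric PSD with unit diagonal),
the matrix with entries `sin (λ * arcsin (X i j))` is positive semidefinite. -/
theorem entrywise_sin_lambda_arcsin_posSemidef (n : ℕ) (hn : 0 < n)
    (lam : ℝ) (hlam : lam ∈ Set.Icc (0 : ℝ) 1)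
    (X : Matrix (Fin n) (Fin n) ℝ) (hX : X.PosSemidef) (hXd : ∀ i, X i i = 1) :
    (Matrix.of fun i j => Real.sin (lam * Real.arcsin (X i j))).PosSemidef :=
  entrywise_sin_lambda_arcsin_posSemidef_general n lam hlam X hX hXd
end
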